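/- Let u, v : ℝ → ℂ be continuous with compact support, and let R, S : ℝ → ℝ be smooth functions such that the set of stationary points of R (points where R′ vanishes) is a finite union of isolated points, closed intervals, and closed half-lines, and likewise for S. Suppose that ∫_{-∞}^{∞} u(x) e^{i R(x) λ} dx = ∫_{-∞}^{∞} v(x) e^{i S(x) λ} dx for all λ ∈ ℝ. Then ∫_{J_R} u(x) dx = ∫_{J_S} v(x) dx, where J_R denotes the union of all open intervals contained in the zero set R^{-1}({0}), and J_S is defined analogously for S. -/

import Mathlib

open MeasureTheory Filter Set Complex Topology


lemma constOn (R : ℝ → ℝ) (hR : ContDiff ℝ (⊤ : ℕ∞) R) {x y : ℝ} (hxy : x ≤ y)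
    (h : ∀ z ∈ Set.Icc x y, deriv R z = 0) : R y = R x := by
  have hd : ∀ z ∈ Set.uIcc x y, DifferentiableAt ℝ R z :=
    fun z _ => (hR.differentiable (by simp)).differentiableAt
  have hi : IntervalIntegrable (deriv R) volume x y :=
    (hR.continuous_deriv (by simp)).intervalIntegrable x y
  have := intervalIntegral.integral_deriv_eq_sub hd hi
  have h0 : (∫ z in x..y, deriv R z) = ∫ z in x..y, (0:ℝ) := by
    apply intervalIntegral.integral_congr
    intro z hz
    exact h z (by rwa [Set.uIcc_of_le hxy] at hz)
  rw [h0] at this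
  simp at this
  linarith

lemma null_bd (R : ℝ → ℝ) (hR : ContDiff ℝ (⊤ : ℕ∞) R)
    (hRstat : ∃ (n : ℕ) (C : Fin n → Set ℝ),
      {x : ℝ | deriv R x = 0} = ⋃ i, C i ∧
      ∀ i, (∃ a b : ℝ, C i = Set.Icc a b) ∨ (∃ a : ℝ, C i = Set.Iic a) ∨
        (∃ a : ℝ, C i = Set.Ici a)) :
    volume ({x : ℝ | R x = 0} \ interior {x : ℝ | R x = 0}) = 0 := by
  obtain ⟨n, C, hC, hCi⟩ := hRstat
  set Z := {x : ℝ | R x = 0} with hZ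
  set D := {x : ℝ | R x = 0 ∧ deriv R x ≠ 0} with hD
  -- D is countable
  have hDdisc : DiscreteTopology ↥D := by
    rw [discreteTopology_subtype_iff]
    intro x hx
    have hder : HasDerivAt R (deriv R x) x :=
      ((hR.differentiable (by simp)).differentiableAt).hasDerivAt
    have hev := hder.eventually_ne (c := R x) hx.2
    rw [Filter.empty_mem_iff_bot.symm]
    have h1 : {z | R z ≠ R x} ∈ nhdsWithin x {x}ᶜ ⊓ Filter.principal D :=
      Filter.mem_inf_of_left hev
    have h2 : D ∈ nhdsWithin x {x}ᶜ ⊓ Filter.principal D := Filter.mem_inf_of_right (Filter.mem_principal_self D)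
    have h3 := Filter.inter_mem h1 h2
    have h4 : {z | R z ≠ R x} ∩ D = ∅ := by
      ext z
      simp only [Set.mem_empty_iff_false, Set.mem_inter_iff, Set.mem_setOf_eq, iff_false, not_and]
      intro hne hz1
      exact absurd (hz1.1.trans hx.1.symm) hne
    rwa [h4] at h3
  have hDcount : D.Countable := by
    have : Countable ↥D := by
      have : TopologicalSpace.SeparableSpace ↥D := by infer_instance
      exact TopologicalSpace.separableSpace_iff_countable.mp this
    exact Set.countable_coe_iff.mp this
  -- main inclusion
  have hsub : Z \ interior Z ⊆ D ∪ ⋃ i, ((Z ∩ C i) \ interior Z) := by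
    intro x hx
    by_cases hd : deriv R x = 0
    · right
      have : x ∈ ⋃ i, C i := by rw [← hC]; exact hd
      obtain ⟨i, hi⟩ := Set.mem_iUnion.mp this
      exact Set.mem_iUnion.mpr ⟨i, ⟨hx.1, hi⟩, hx.2⟩
    · exact Or.inl ⟨hx.1, hd⟩
  have hCz : ∀ i, ∀ w ∈ C i, deriv R w = 0 := by
    intro i w hw
    have h5 : w ∈ ⋃ j, C j := Set.mem_iUnion.mpr ⟨i, hw⟩
    rw [← hC] at h5
    exact h5
  refine measure_mono_null hsub (measure_union_null (hDcount.measure_zero _) ?_)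
  refine measure_iUnion_null fun i => ?_
  rcases hCi i with ⟨a, b, hab⟩ | ⟨a, ha⟩ | ⟨a, ha⟩
  · rcases le_or_gt a b with h1 | h1
    · have hconst : ∀ z ∈ Set.Icc a b, R z = R a := by
        intro z hz
        exact constOn R hR hz.1 (fun w hw => hCz i w (by rw [hab]; exact ⟨hw.1, hw.2.trans hz.2⟩))
      by_cases hRa : R a = 0
      · have hIoo : Set.Ioo a b ⊆ interior Z := by
          apply interior_maximal _ isOpen_Ioo
          intro z hz
          exact (hconst z ⟨hz.1.le, hz.2.le⟩).trans hRa
        have : (Z ∩ C i) \ interior Z ⊆ {a, b} := by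
          rintro z ⟨⟨_, hzC⟩, hznot⟩
          rw [hab] at hzC
          rcases eq_or_lt_of_le hzC.1 with h | h
          · exact Or.inl h.symm
          rcases eq_or_lt_of_le hzC.2 with h' | h'
          · exact Or.inr h'
          exact absurd (hIoo ⟨h, h'⟩) hznot
        exact measure_mono_null this ((Set.toFinite ({a, b} : Set ℝ)).measure_zero _)
      · have : (Z ∩ C i) \ interior Z ⊆ (∅ : Set ℝ) := by
          rintro z ⟨⟨hzZ, hzC⟩, _⟩
          rw [hab] at hzC
          exact absurd ((hconst z hzC).symm.trans hzZ) hRa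
        exact measure_mono_null this (by simp)
    · have : (Z ∩ C i) \ interior Z ⊆ (∅ : Set ℝ) := by
        rintro z ⟨⟨_, hzC⟩, _⟩
        rw [hab, Set.Icc_eq_empty_of_lt h1] at hzC
        exact hzC
      exact measure_mono_null this (by simp)
  · have hconst : ∀ z ∈ Set.Iic a, R z = R a := by
      intro z hz
      exact (constOn R hR (Set.mem_Iic.mp hz) (fun w hw => hCz i w (by rw [ha]; exact Set.mem_Iic.mpr hw.2))).symm
    by_cases hRa : R a = 0
    · have hIio : Set.Iio a ⊆ interior Z := by
        apply interior_maximal _ isOpen_Iio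
        intro z hz
        exact (hconst z (Set.mem_Iic.mpr (le_of_lt (Set.mem_Iio.mp hz)))).trans hRa
      have : (Z ∩ C i) \ interior Z ⊆ {a} := by
        rintro z ⟨⟨_, hzC⟩, hznot⟩
        rw [ha] at hzC
        rcases eq_or_lt_of_le (Set.mem_Iic.mp hzC) with h | h
        · exact h
        exact absurd (hIio h) hznot
      exact measure_mono_null this (by simp)
    · have : (Z ∩ C i) \ interior Z ⊆ (∅ : Set ℝ) := by
        rintro z ⟨⟨hzZ, hzC⟩, _⟩
        rw [ha] at hzC
        exact absurd ((hconst z hzC).symm.trans hzZ) hRa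
      exact measure_mono_null this (by simp)
  · have hconst : ∀ z ∈ Set.Ici a, R z = R a := by
      intro z hz
      exact constOn R hR (Set.mem_Ici.mp hz) (fun w hw => hCz i w (by rw [ha]; exact Set.mem_Ici.mpr hw.1))
    by_cases hRa : R a = 0
    · have hIoi : Set.Ioi a ⊆ interior Z := by
        apply interior_maximal _ isOpen_Ioi
        intro z hz
        exact (hconst z (Set.mem_Iic.mpr (le_of_lt (Set.mem_Iio.mp hz)))).trans hRa
      have : (Z ∩ C i) \ interior Z ⊆ {a} := by
        rintro z ⟨⟨_, hzC⟩, hznot⟩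
        rw [ha] at hzC
        rcases eq_or_lt_of_le (Set.mem_Ici.mp hzC) with h | h
        · exact h.symm
        exact absurd (hIoi h) hznot
      exact measure_mono_null this (by simp)
    · have : (Z ∩ C i) \ interior Z ⊆ (∅ : Set ℝ) := by
        rintro z ⟨⟨hzZ, hzC⟩, _⟩
        rw [ha] at hzC
        exact absurd ((hconst z hzC).symm.trans hzZ) hRa
      exact measure_mono_null this (by simp)


lemma norm_exp_I_mul (r l : ℝ) : ‖Complex.exp (Complex.I * (r:ℂ) * (l:ℂ))‖ = 1 := by
  have : Complex.I * (r:ℂ) * (l:ℂ) = ((r * l : ℝ) : ℂ) * Complex.I := by push_cast; ring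
  rw [this, Complex.norm_exp_ofReal_mul_I]

lemma fubini_step (u : ℝ → ℂ) (hu : Continuous u) (hus : HasCompactSupport u)
    (R : ℝ → ℝ) (hRc : Continuous R) {T : ℝ} (hT : 0 ≤ T) :
    (∫ l in (0:ℝ)..T, ∫ x : ℝ, u x * Complex.exp (Complex.I * (R x : ℂ) * (l:ℂ))) =
    ∫ x : ℝ, u x * ∫ l in (0:ℝ)..T, Complex.exp (Complex.I * (R x : ℂ) * (l:ℂ)) := by
  have hint : Integrable (Function.uncurry fun (l : ℝ) (x : ℝ) =>
      u x * Complex.exp (Complex.I * (R x : ℂ) * (l:ℂ)))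
      ((volume.restrict (Set.Ioc 0 T)).prod volume) := by
    have hmeas : Continuous (Function.uncurry fun (l : ℝ) (x : ℝ) =>
        u x * Complex.exp (Complex.I * (R x : ℂ) * (l:ℂ))) := by
      apply Continuous.mul (hu.comp continuous_snd)
      exact Complex.continuous_exp.comp
        (((continuous_const.mul ((Complex.continuous_ofReal.comp (hRc.comp continuous_snd)))).mul
          (Complex.continuous_ofReal.comp continuous_fst)))
    have hb : Integrable (fun p : ℝ × ℝ => (1:ℝ) * ‖u p.2‖)
        ((volume.restrict (Set.Ioc 0 T)).prod volume) := by
      exact Integrable.mul_prod (integrable_const (1:ℝ))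
        (hu.norm.integrable_of_hasCompactSupport hus.norm)
    apply Integrable.mono' hb hmeas.aestronglyMeasurable
    filter_upwards with p
    rw [Function.uncurry]
    simp only [norm_mul, norm_exp_I_mul, mul_one, one_mul, le_refl]
  rw [intervalIntegral.integral_of_le hT]
  rw [MeasureTheory.integral_integral_swap hint]
  congr 1
  ext x
  rw [← intervalIntegral.integral_of_le hT, intervalIntegral.integral_const_mul]

lemma cesaro (u : ℝ → ℂ) (hu : Continuous u) (hus : HasCompactSupport u)
    (R : ℝ → ℝ) (hRc : Continuous R) :
    Tendsto (fun n : ℕ => ∫ x : ℝ, u x * ((((n:ℝ)) : ℂ)⁻¹ *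
        ∫ l in (0:ℝ)..(n:ℝ), Complex.exp (Complex.I * (R x : ℂ) * (l:ℂ))))
      atTop (𝓝 (∫ x in {x : ℝ | R x = 0}, u x)) := by
  have hZm : MeasurableSet {x : ℝ | R x = 0} :=
    hRc.measurable (measurableSet_singleton (0:ℝ))
  have heval : ∀ (n : ℕ), 1 ≤ n → ∀ x : ℝ,
      ((((n:ℝ)) : ℂ)⁻¹ * ∫ l in (0:ℝ)..(n:ℝ), Complex.exp (Complex.I * (R x : ℂ) * (l:ℂ))) =
      if R x = 0 then 1 else
        (Complex.exp (Complex.I * (R x:ℂ) * (((n:ℝ)):ℂ)) - 1) / (Complex.I * (R x:ℂ) * (((n:ℝ)):ℂ)) := by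
    intro n hn x
    have hn0 : (((n:ℝ)):ℂ) ≠ 0 := by
      simp only [ne_eq, Complex.ofReal_eq_zero, Nat.cast_eq_zero]
      omega
    by_cases hx : R x = 0
    · rw [if_pos hx]
      simp only [hx, Complex.ofReal_zero, mul_zero, zero_mul, Complex.exp_zero]
      rw [intervalIntegral.integral_const]
      simp only [sub_zero, Complex.real_smul, mul_one]
      exact inv_mul_cancel₀ hn0
    · rw [if_neg hx]
      have hc : Complex.I * (R x:ℂ) ≠ 0 :=
        mul_ne_zero Complex.I_ne_zero (by simpa using hx)
      rw [integral_exp_mul_complex hc]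
      simp only [Complex.ofReal_zero, mul_zero, Complex.exp_zero]
      field_simp
  rw [← MeasureTheory.integral_indicator hZm]
  apply MeasureTheory.tendsto_integral_filter_of_dominated_convergence (fun x => ‖u x‖)
  · -- measurability
    filter_upwards [eventually_ge_atTop 1] with n hn
    have : (fun x => u x * ((((n:ℝ)) : ℂ)⁻¹ *
        ∫ l in (0:ℝ)..(n:ℝ), Complex.exp (Complex.I * (R x : ℂ) * (l:ℂ)))) =
        (fun x => u x * (if R x = 0 then 1 else
        (Complex.exp (Complex.I * (R x:ℂ) * (((n:ℝ)):ℂ)) - 1) / (Complex.I * (R x:ℂ) * (((n:ℝ)):ℂ)))) := by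
      funext x; rw [heval n hn x]
    rw [this]
    apply Measurable.aestronglyMeasurable
    apply hu.measurable.mul
    apply Measurable.ite hZm measurable_const
    fun_prop
  · -- bound
    filter_upwards [eventually_ge_atTop 1] with n hn
    filter_upwards with x
    rw [norm_mul]
    have h1 : ‖∫ l in (0:ℝ)..(n:ℝ), Complex.exp (Complex.I * (R x : ℂ) * (l:ℂ))‖ ≤ 1 * |(n:ℝ) - 0| :=
      intervalIntegral.norm_integral_le_of_norm_le_const (fun l _ => le_of_eq (norm_exp_I_mul _ _))
    have hnn : (0:ℝ) < n := by exact_mod_cast hn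
    have h2 : ‖((((n:ℝ)) : ℂ))⁻¹‖ = ((n:ℝ))⁻¹ := by
      rw [norm_inv, Complex.norm_real, Real.norm_eq_abs, abs_of_pos hnn]
    have h3 : ‖((((n:ℝ)) : ℂ)⁻¹ *
        ∫ l in (0:ℝ)..(n:ℝ), Complex.exp (Complex.I * (R x : ℂ) * (l:ℂ)))‖ ≤ 1 := by
      rw [norm_mul, h2]
      calc ((n:ℝ))⁻¹ * ‖∫ l in (0:ℝ)..(n:ℝ), Complex.exp (Complex.I * (R x : ℂ) * (l:ℂ))‖
          ≤ ((n:ℝ))⁻¹ * (1 * |(n:ℝ) - 0|) := by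
            apply mul_le_mul_of_nonneg_left h1 (by positivity)
        _ = 1 := by rw [sub_zero, abs_of_pos hnn]; field_simp
    nlinarith [norm_nonneg (u x), norm_nonneg (((((n:ℝ)) : ℂ)⁻¹ *
        ∫ l in (0:ℝ)..(n:ℝ), Complex.exp (Complex.I * (R x : ℂ) * (l:ℂ))))]
  · exact hu.norm.integrable_of_hasCompactSupport hus.norm
  · -- pointwise limit
    filter_upwards with x
    apply Tendsto.congr' (f₁ := fun n : ℕ => u x * (if R x = 0 then 1 else
        (Complex.exp (Complex.I * (R x:ℂ) * (((n:ℝ)):ℂ)) - 1) / (Complex.I * (R x:ℂ) * (((n:ℝ)):ℂ))))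
    · filter_upwards [eventually_ge_atTop 1] with n hn
      rw [heval n hn x]
    by_cases hx : R x = 0
    · simp only [hx, if_true, mul_one]
      have : Set.indicator {x : ℝ | R x = 0} u x = u x := Set.indicator_of_mem (by exact hx) u
      rw [this]
      exact tendsto_const_nhds
    · simp only [hx, if_false]
      have : Set.indicator {x : ℝ | R x = 0} u x = 0 := Set.indicator_of_notMem (by exact hx) u
      rw [this]
      set c := Complex.I * (R x:ℂ) with hcdef
      have hc : c ≠ 0 := mul_ne_zero Complex.I_ne_zero (by simpa using hx)
      have hcn : (0:ℝ) < ‖c‖ := norm_pos_iff.mpr hc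
      apply squeeze_zero_norm' (a := fun n : ℕ => (2 * ‖u x‖ / ‖c‖) / n)
      · filter_upwards [eventually_ge_atTop 1] with n hn
        have hnn : (0:ℝ) < n := by exact_mod_cast hn
        have hne : ‖Complex.exp (c * (((n:ℝ)):ℂ)) - 1‖ ≤ 2 := by
          calc ‖Complex.exp (c * (((n:ℝ)):ℂ)) - 1‖ ≤ ‖Complex.exp (c * (((n:ℝ)):ℂ))‖ + ‖(1:ℂ)‖ :=
                norm_sub_le _ _
            _ = 2 := by
                rw [hcdef, mul_assoc, ← mul_assoc]
                rw [norm_exp_I_mul (R x) ((n:ℝ))]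
                norm_num
        rw [norm_mul, norm_div, norm_mul]
        have h4 : ‖(((n:ℝ)):ℂ)‖ = (n:ℝ) := by
          rw [Complex.norm_real, Real.norm_eq_abs, abs_of_pos hnn]
        rw [h4]
        rw [div_div]
        calc ‖u x‖ * (‖Complex.exp (c * (((n:ℝ)):ℂ)) - 1‖ / (‖c‖ * (n:ℝ)))
            ≤ ‖u x‖ * (2 / (‖c‖ * (n:ℝ))) := by gcongr
          _ = 2 * ‖u x‖ / (‖c‖ * (n:ℝ)) := by ring
      · exact (tendsto_const_div_atTop_nhds_zero_nat (2 * ‖u x‖ / ‖c‖))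


theorem stmt16 (u v : ℝ → ℂ)
    (hu : Continuous u) (hus : HasCompactSupport u)
    (hv : Continuous v) (hvs : HasCompactSupport v)
    (R S : ℝ → ℝ) (hR : ContDiff ℝ (⊤ : ℕ∞) R) (hS : ContDiff ℝ (⊤ : ℕ∞) S)
    -- the stationary point set of R is a finite union of (possibly degenerate)
    -- closed intervals and closed half-lines
    (hRstat : ∃ (n : ℕ) (C : Fin n → Set ℝ),
      {x : ℝ | deriv R x = 0} = ⋃ i, C i ∧
      ∀ i, (∃ a b : ℝ, C i = Set.Icc a b) ∨ (∃ a : ℝ, C i = Set.Iic a) ∨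
        (∃ a : ℝ, C i = Set.Ici a))
    (hSstat : ∃ (n : ℕ) (C : Fin n → Set ℝ),
      {x : ℝ | deriv S x = 0} = ⋃ i, C i ∧
      ∀ i, (∃ a b : ℝ, C i = Set.Icc a b) ∨ (∃ a : ℝ, C i = Set.Iic a) ∨
        (∃ a : ℝ, C i = Set.Ici a))
    (heq : ∀ l : ℝ,
      (∫ x : ℝ, u x * Complex.exp (Complex.I * ((R x : ℝ) : ℂ) * (l : ℂ))) =
        ∫ x : ℝ, v x * Complex.exp (Complex.I * ((S x : ℝ) : ℂ) * (l : ℂ))) :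
    -- the interior of the zero set is the union of all open intervals contained in it
    (∫ x in interior {x : ℝ | R x = 0}, u x) = ∫ x in interior {x : ℝ | S x = 0}, v x := by
  have hRc : Continuous R := hR.continuous
  have hSc : Continuous S := hS.continuous
  set seq : ℕ → ℂ := fun n => (((n:ℝ)) : ℂ)⁻¹ *
    ∫ l in (0:ℝ)..(n:ℝ), ∫ x : ℝ, u x * Complex.exp (Complex.I * ((R x : ℝ) : ℂ) * (l : ℂ))
    with hseq
  have h1 : Tendsto seq atTop (𝓝 (∫ x in {x : ℝ | R x = 0}, u x)) := by
    apply (cesaro u hu hus R hRc).congr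
    intro n
    simp only [hseq]
    rw [fubini_step u hu hus R hRc (Nat.cast_nonneg n), ← MeasureTheory.integral_const_mul]
    congr 1; funext x; ring
  have h2 : Tendsto seq atTop (𝓝 (∫ x in {x : ℝ | S x = 0}, v x)) := by
    apply (cesaro v hv hvs S hSc).congr
    intro n
    simp only [hseq]
    have : (∫ l in (0:ℝ)..(n:ℝ), ∫ x : ℝ, u x * Complex.exp (Complex.I * ((R x : ℝ) : ℂ) * (l : ℂ)))
        = ∫ l in (0:ℝ)..(n:ℝ), ∫ x : ℝ, v x * Complex.exp (Complex.I * ((S x : ℝ) : ℂ) * (l : ℂ)) := by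
      apply intervalIntegral.integral_congr
      intro l _
      exact heq l
    rw [this, fubini_step v hv hvs S hSc (Nat.cast_nonneg n), ← MeasureTheory.integral_const_mul]
    congr 1; funext x; ring
  have key : (∫ x in {x : ℝ | R x = 0}, u x) = ∫ x in {x : ℝ | S x = 0}, v x :=
    tendsto_nhds_unique h1 h2
  have hae : ∀ (W : ℝ → ℝ), volume ({x : ℝ | W x = 0} \ interior {x : ℝ | W x = 0}) = 0 →
      (interior {x : ℝ | W x = 0} : Set ℝ) =ᵐ[volume] {x : ℝ | W x = 0} := by
    intro W hW
    rw [MeasureTheory.ae_eq_set]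
    constructor
    · have he : interior {x : ℝ | W x = 0} \ {x : ℝ | W x = 0} = ∅ :=
        Set.diff_eq_empty.mpr interior_subset
      rw [he]
      simp
    · exact hW
  rw [MeasureTheory.setIntegral_congr_set (hae R (null_bd R hR hRstat))]
  rw [MeasureTheory.setIntegral_congr_set (hae S (null_bd S hS hSstat))]
  exact key
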